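/- arXiv:1901.07821 — 2 statements merged into one kernel-verified Lean document; each statement's English description precedes it below -/
import Mathlib

section
/- If the divergence d(p,q) is convex in its second argument q, then the rate-distortion-perception function R(D,P) is jointly convex in (D,P): for λ ∈ [0,1], λ R(D1,P1) + (1−λ) R(D2,P2) ≥ R(λD1 + (1−λ)D2, λP1 + (1−λ)P2). -/
open scoped BigOperators ENNReal

/-- A probability mass function on a finite alphabet. -/
def IsPMF {𝓧 : Type*} [Fintype 𝓧] (p : 𝓧 → ℝ) : Prop :=
  (∀ x, 0 ≤ p x) ∧ ∑ x, p x = 1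

/-- A conditional distribution (channel/kernel) on a finite alphabet. -/
def IsKernel {𝓧 : Type*} [Fintype 𝓧] (K : 𝓧 → 𝓧 → ℝ) : Prop :=
  ∀ x, IsPMF (K x)

/-- Output (marginal) distribution of the reconstruction `X̂`. -/
def outDist {𝓧 : Type*} [Fintype 𝓧] (p : 𝓧 → ℝ) (K : 𝓧 → 𝓧 → ℝ) : 𝓧 → ℝ :=
  fun y => ∑ x, p x * K x y

/-- Expected distortion `E[Δ(X, X̂)]`. -/
def expDistortion {𝓧 : Type*} [Fintype 𝓧] (p : 𝓧 → ℝ) (Δ : 𝓧 → 𝓧 → ℝ)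
    (K : 𝓧 → 𝓧 → ℝ) : ℝ :=
  ∑ x, ∑ y, p x * K x y * Δ x y

/-- Mutual information `I(X; X̂)` (natural log). -/
noncomputable def mutualInfo {𝓧 : Type*} [Fintype 𝓧] (p : 𝓧 → ℝ) (K : 𝓧 → 𝓧 → ℝ) : ℝ :=
  ∑ x, ∑ y, p x * K x y * Real.log (K x y / outDist p K y)

/-- The rate-distortion-perception function
`R(D,P) = min { I(X;X̂) : E[Δ(X,X̂)] ≤ D, d(p_X, p_X̂) ≤ P }`,
with the convention that the minimum over an empty set is `+∞`. -/
noncomputable def RDP {𝓧 : Type*} [Fintype 𝓧] (p : 𝓧 → ℝ) (Δ : 𝓧 → 𝓧 → ℝ)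
    (d : (𝓧 → ℝ) → (𝓧 → ℝ) → ℝ) (D P : ℝ) : ℝ≥0∞ :=
  sInf { r : ℝ≥0∞ | ∃ K : 𝓧 → 𝓧 → ℝ, IsKernel K ∧ expDistortion p Δ K ≤ D ∧
    d p (outDist p K) ≤ P ∧ r = ENNReal.ofReal (mutualInfo p K) }

/-- The rate-distortion function without perception constraint, `R(D, ∞)`. -/
noncomputable def RDPinf {𝓧 : Type*} [Fintype 𝓧] (p : 𝓧 → ℝ) (Δ : 𝓧 → 𝓧 → ℝ)
    (D : ℝ) : ℝ≥0∞ :=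
  sInf { r : ℝ≥0∞ | ∃ K : 𝓧 → 𝓧 → ℝ, IsKernel K ∧ expDistortion p Δ K ≤ D ∧
    r = ENNReal.ofReal (mutualInfo p K) }

/-!
Mix feasible channels: if `K₁` meets the constraints `(D₁, P₁)` and `K₂` meets `(D₂, P₂)`, then
`K = λ K₁ + (1 - λ) K₂` meets the mixed constraints, since the expected distortion and the output
distribution depend linearly on the channel and `d` is convex in its second argument. By the
log-sum inequality `I(X; X̂)` is convex in the channel, so the rate of `K` is at most
`λ I₁ + (1 - λ) I₂`; taking infima over `K₁` and `K₂` gives the claim.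
-/

open Finset Real

-- The supporting line at `(a, b)` of the jointly convex `(a', b') ↦ a' * log (a' / b')`.
lemma mul_log_div_add_sub_le {a b a' b' : ℝ} (ha : 0 < a) (hb : 0 < b) (ha' : 0 ≤ a')
    (hb' : 0 ≤ b') (hab' : 0 < a' → 0 < b') :
    a' * log (a / b) + a' - a * b' / b ≤ a' * log (a' / b') := by
  rcases ha'.eq_or_lt with rfl | ha'
  · simp only [zero_mul, add_zero, zero_sub, zero_div, log_zero, neg_nonpos]
    positivity
  have hb'_pos := hab' ha'
  have hlog : 1 - (a / b) / (a' / b') ≤ log ((a' / b') / (a / b)) := by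
    have := one_sub_inv_le_log_of_pos (x := (a' / b') / (a / b)) (by positivity)
    rwa [inv_div] at this
  rw [log_div (by positivity) (by positivity)] at hlog
  have hlin : a' * (1 - (a / b) / (a' / b')) = a' - a * b' / b := by field_simp
  linarith [mul_le_mul_of_nonneg_left hlog ha'.le]

theorem sum_mul_log_div_le {ι : Type*} (s : Finset ι) {a b : ι → ℝ}
    (ha : ∀ i ∈ s, 0 ≤ a i) (hb : ∀ i ∈ s, 0 ≤ b i) (hab : ∀ i ∈ s, 0 < a i → 0 < b i) :
    (∑ i ∈ s, a i) * log ((∑ i ∈ s, a i) / ∑ i ∈ s, b i) ≤ ∑ i ∈ s, a i * log (a i / b i) := by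
  rcases (sum_nonneg ha).eq_or_lt with hA | hA
  · have hzero := (sum_eq_zero_iff_of_nonneg ha).1 hA.symm
    rw [← hA, zero_mul]
    exact (sum_eq_zero fun i hi => by rw [hzero i hi, zero_mul]).ge
  obtain ⟨j, hj, haj⟩ := exists_lt_of_sum_lt (s := s) (f := 0) (g := a) (by simpa using hA)
  have hB : 0 < ∑ i ∈ s, b i := sum_pos' hb ⟨j, hj, hab j hj haj⟩
  calc (∑ i ∈ s, a i) * log ((∑ i ∈ s, a i) / ∑ i ∈ s, b i)
      = ∑ i ∈ s, (a i * log ((∑ i ∈ s, a i) / ∑ i ∈ s, b i) + a i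
          - (∑ i ∈ s, a i) * b i / ∑ i ∈ s, b i) := by
        rw [sum_sub_distrib, sum_add_distrib, ← sum_mul, ← sum_div, ← mul_sum]
        field_simp
        ring
    _ ≤ ∑ i ∈ s, a i * log (a i / b i) :=
        sum_le_sum fun i hi => mul_log_div_add_sub_le hA hB (ha i hi) (hb i hi) (hab i hi)

lemma mul_mul_log_div_mul_left (w a b : ℝ) :
    w * a * log (w * a / (w * b)) = w * (a * log (a / b)) := by
  rcases eq_or_ne w 0 with rfl | hw
  · simp
  · rw [mul_div_mul_left _ _ hw, mul_assoc]

lemma mul_log_div_nonneg_comb_le {w₁ w₂ a₁ a₂ b₁ b₂ : ℝ} (hw₁ : 0 ≤ w₁) (hw₂ : 0 ≤ w₂)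
    (ha₁ : 0 ≤ a₁) (ha₂ : 0 ≤ a₂) (hb₁ : 0 ≤ b₁) (hb₂ : 0 ≤ b₂)
    (hab₁ : 0 < a₁ → 0 < b₁) (hab₂ : 0 < a₂ → 0 < b₂) :
    (w₁ * a₁ + w₂ * a₂) * log ((w₁ * a₁ + w₂ * a₂) / (w₁ * b₁ + w₂ * b₂)) ≤
      w₁ * (a₁ * log (a₁ / b₁)) + w₂ * (a₂ * log (a₂ / b₂)) := by
  have hpos : ∀ {w a b : ℝ}, 0 ≤ w → 0 ≤ a → (0 < a → 0 < b) → 0 < w * a → 0 < w * b :=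
    fun hw ha hab h => mul_pos (pos_of_mul_pos_left h ha) (hab (pos_of_mul_pos_right h hw))
  have := sum_mul_log_div_le univ (a := ![w₁ * a₁, w₂ * a₂]) (b := ![w₁ * b₁, w₂ * b₂])
    (fun i _ => by fin_cases i; exacts [mul_nonneg hw₁ ha₁, mul_nonneg hw₂ ha₂])
    (fun i _ => by fin_cases i; exacts [mul_nonneg hw₁ hb₁, mul_nonneg hw₂ hb₂])
    (fun i _ => by fin_cases i; exacts [hpos hw₁ ha₁ hab₁, hpos hw₂ ha₂ hab₂])
  simpa [Fin.sum_univ_two, mul_mul_log_div_mul_left] using this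

section Channel

variable {𝓧 : Type*} [Fintype 𝓧]

lemma convex_setOf_isKernel : Convex ℝ {K : 𝓧 → 𝓧 → ℝ | IsKernel K} :=
  fun _ hK₁ _ hK₂ _ _ ha hb hab x => convex_stdSimplex ℝ 𝓧 (hK₁ x) (hK₂ x) ha hb hab

lemma outDist_add (p : 𝓧 → ℝ) (K₁ K₂ : 𝓧 → 𝓧 → ℝ) :
    outDist p (K₁ + K₂) = outDist p K₁ + outDist p K₂ := by
  ext y
  simp only [outDist, Pi.add_apply, mul_add, sum_add_distrib]

lemma outDist_smul (p : 𝓧 → ℝ) (c : ℝ) (K : 𝓧 → 𝓧 → ℝ) :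
    outDist p (c • K) = c • outDist p K := by
  ext y
  simp only [outDist, Pi.smul_apply, smul_eq_mul, mul_sum]
  exact sum_congr rfl fun x _ => by ring

lemma expDistortion_add (p : 𝓧 → ℝ) (Δ K₁ K₂ : 𝓧 → 𝓧 → ℝ) :
    expDistortion p Δ (K₁ + K₂) = expDistortion p Δ K₁ + expDistortion p Δ K₂ := by
  simp only [expDistortion, Pi.add_apply, mul_add, add_mul, sum_add_distrib]

lemma expDistortion_smul (p : 𝓧 → ℝ) (Δ : 𝓧 → 𝓧 → ℝ) (c : ℝ) (K : 𝓧 → 𝓧 → ℝ) :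
    expDistortion p Δ (c • K) = c * expDistortion p Δ K := by
  simp only [expDistortion, Pi.smul_apply, smul_eq_mul, mul_sum]
  exact sum_congr rfl fun x _ => sum_congr rfl fun y _ => by ring

lemma mul_le_outDist {p : 𝓧 → ℝ} {K : 𝓧 → 𝓧 → ℝ} (hp : IsPMF p) (hK : IsKernel K) (x y : 𝓧) :
    p x * K x y ≤ outDist p K y :=
  single_le_sum (f := fun x => p x * K x y) (fun x _ => mul_nonneg (hp.1 x) ((hK x).1 y))
    (mem_univ x)

lemma isPMF_outDist {p : 𝓧 → ℝ} {K : 𝓧 → 𝓧 → ℝ} (hp : IsPMF p) (hK : IsKernel K) :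
    IsPMF (outDist p K) := by
  refine ⟨fun y => sum_nonneg fun x _ => mul_nonneg (hp.1 x) ((hK x).1 y), ?_⟩
  simp only [outDist]
  rw [sum_comm]
  simp only [← mul_sum, (hK _).2, mul_one, hp.2]

theorem convexOn_mutualInfo {p : 𝓧 → ℝ} (hp : IsPMF p) :
    ConvexOn ℝ {K : 𝓧 → 𝓧 → ℝ | IsKernel K} (mutualInfo p) := by
  refine ⟨convex_setOf_isKernel, fun K₁ hK₁ K₂ hK₂ a b ha hb _ => ?_⟩
  simp only [mutualInfo, outDist_add, outDist_smul, Pi.add_apply, Pi.smul_apply, smul_eq_mul,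
    mul_sum, ← sum_add_distrib]
  refine sum_le_sum fun x _ => sum_le_sum fun y _ => ?_
  rcases (hp.1 x).eq_or_lt with hpx | hpx
  · simp [← hpx]
  have hpos : ∀ {K : 𝓧 → 𝓧 → ℝ}, IsKernel K → 0 < K x y → 0 < outDist p K y :=
    fun hK h => (mul_pos hpx h).trans_le (mul_le_outDist hp hK x y)
  have := mul_log_div_nonneg_comb_le ha hb ((hK₁ x).1 y) ((hK₂ x).1 y)
    ((isPMF_outDist hp hK₁).1 y) ((isPMF_outDist hp hK₂).1 y) (hpos hK₁) (hpos hK₂)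
  linear_combination mul_le_mul_of_nonneg_left this hpx.le

end Channel

lemma ENNReal.le_mul_sInf_add_mul_sInf {a c₁ c₂ : ℝ≥0∞} {S₁ S₂ : Set ℝ≥0∞}
    (hc₁ : c₁ ≠ 0) (hc₁' : c₁ ≠ ∞) (hc₂ : c₂ ≠ 0) (hc₂' : c₂ ≠ ∞)
    (h : ∀ r₁ ∈ S₁, ∀ r₂ ∈ S₂, a ≤ c₁ * r₁ + c₂ * r₂) :
    a ≤ c₁ * sInf S₁ + c₂ * sInf S₂ := by
  rw [sInf_eq_iInf', sInf_eq_iInf', ENNReal.mul_iInf_of_ne hc₁ hc₁',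
    ENNReal.mul_iInf_of_ne hc₂ hc₂']
  exact ENNReal.le_iInf_add_iInf fun r₁ r₂ => h r₁ r₁.2 r₂ r₂.2

lemma RDP_le_ofReal_mutualInfo {𝓧 : Type*} [Fintype 𝓧] {p : 𝓧 → ℝ} {Δ K : 𝓧 → 𝓧 → ℝ}
    {d : (𝓧 → ℝ) → (𝓧 → ℝ) → ℝ} {D P : ℝ} (hK : IsKernel K) (hD : expDistortion p Δ K ≤ D)
    (hP : d p (outDist p K) ≤ P) :
    RDP p Δ d D P ≤ ENNReal.ofReal (mutualInfo p K) :=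
  sInf_le ⟨K, hK, hD, hP, rfl⟩

/-- if the divergence d is convex in its second argument, then R(D,P) is
jointly convex in (D,P):
λ R(D₁,P₁) + (1−λ) R(D₂,P₂) ≥ R(λD₁+(1−λ)D₂, λP₁+(1−λ)P₂). -/
theorem rdp_convex {𝓧 : Type*} [Fintype 𝓧]
    (p : 𝓧 → ℝ) (hp : IsPMF p) (Δ : 𝓧 → 𝓧 → ℝ)
    (d : (𝓧 → ℝ) → (𝓧 → ℝ) → ℝ)
    (hconv : ∀ (p₀ q₁ q₂ : 𝓧 → ℝ), IsPMF p₀ → IsPMF q₁ → IsPMF q₂ →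
      ∀ l : ℝ, 0 ≤ l → l ≤ 1 →
        d p₀ (fun z => l * q₁ z + (1 - l) * q₂ z) ≤ l * d p₀ q₁ + (1 - l) * d p₀ q₂)
    (D₁ P₁ D₂ P₂ l : ℝ) (hl0 : 0 ≤ l) (hl1 : l ≤ 1) :
    RDP p Δ d (l * D₁ + (1 - l) * D₂) (l * P₁ + (1 - l) * P₂) ≤
      ENNReal.ofReal l * RDP p Δ d D₁ P₁ + ENNReal.ofReal (1 - l) * RDP p Δ d D₂ P₂ := by
  -- For `l ∈ {0, 1}` one constraint set may be empty, and `0 * ∞ = 0` in `ℝ≥0∞`.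
  rcases hl0.eq_or_lt with rfl | hl_pos
  · simp
  rcases hl1.eq_or_lt with rfl | hl_lt_one
  · simp
  have hl1_sub : 0 ≤ 1 - l := by linarith
  refine ENNReal.le_mul_sInf_add_mul_sInf (by simpa) ENNReal.ofReal_ne_top
    (by simpa) ENNReal.ofReal_ne_top ?_
  rintro _ ⟨K₁, hK₁, hD₁, hP₁, rfl⟩ _ ⟨K₂, hK₂, hD₂, hP₂, rfl⟩
  have hK : IsKernel (l • K₁ + (1 - l) • K₂) :=
    convex_setOf_isKernel hK₁ hK₂ hl0 hl1_sub (add_sub_cancel l 1)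
  have hD : expDistortion p Δ (l • K₁ + (1 - l) • K₂) ≤ l * D₁ + (1 - l) * D₂ := by
    rw [expDistortion_add, expDistortion_smul, expDistortion_smul]
    gcongr
  have hP : d p (outDist p (l • K₁ + (1 - l) • K₂)) ≤ l * P₁ + (1 - l) * P₂ := by
    rw [outDist_add, outDist_smul, outDist_smul]
    refine (hconv p _ _ hp (isPMF_outDist hp hK₁) (isPMF_outDist hp hK₂) l hl0 hl1).trans ?_
    gcongr
  calc RDP p Δ d (l * D₁ + (1 - l) * D₂) (l * P₁ + (1 - l) * P₂)
      ≤ ENNReal.ofReal (mutualInfo p (l • K₁ + (1 - l) • K₂)) :=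
        RDP_le_ofReal_mutualInfo hK hD hP
    _ ≤ ENNReal.ofReal (l * mutualInfo p K₁ + (1 - l) * mutualInfo p K₂) :=
        ENNReal.ofReal_le_ofReal <| (convexOn_mutualInfo hp).2 hK₁ hK₂ hl0 hl1_sub (by ring)
    _ ≤ _ := by
        rw [← ENNReal.ofReal_mul hl0, ← ENNReal.ofReal_mul hl1_sub]
        exact ENNReal.ofReal_add_le
end

section
/- Let X, X̂, X̃ be random variables such that X̃ is conditionally independent of X given X̂, the conditional distribution of X̃ given X̂ equals the conditional distribution of X given X̂, and X̂ = E[X | X̂] almost surely. Then E[‖X − X̃‖²] = 2 E[‖X − X̂‖²]. -/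
/-!
Given `X̂ = b`, the variables `X` and `X̃` are independent draws from one law `κ b`, whose mean is
`b` because `X̂ = E[X | X̂]`. For two independent draws `x, y` from a law with mean `b`, expanding
`‖x - y‖² = ‖(x - b) - (y - b)‖²` and integrating kills the cross term, so
`E‖x - y‖² = 2 E‖x - b‖²`. Integrating this fibrewise identity over the law of `X̂` gives the claim.
-/

open MeasureTheory ProbabilityTheory

open scoped InnerProductSpace

theorem integral_prod_norm_sub_sq {E : Type*} [NormedAddCommGroup E] [InnerProductSpace ℝ E]
    [CompleteSpace E] [MeasurableSpace E] (p : Measure E) [IsProbabilityMeasure p]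
    (hp : MemLp id 2 p) :
    ∫ q, ‖q.1 - q.2‖ ^ 2 ∂p.prod p = 2 * ∫ x, ‖x - ∫ y, y ∂p‖ ^ 2 ∂p := by
  set m := ∫ y, y ∂p
  have hid : Integrable (fun y : E => y) p := hp.integrable one_le_two
  have hcentered : Integrable (fun y => y - m) p := hid.sub (integrable_const m)
  have hmean_zero : ∫ y, (y - m) ∂p = 0 := by
    rw [integral_sub hid (integrable_const m), integral_const]
    simp [m]
  have hvar : Integrable (fun y => ‖y - m‖ ^ 2) p :=
    (hp.sub (memLp_const m)).integrable_norm_pow' (p := 2)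
  have hintegral_right : ∀ x, ∫ y, ‖x - y‖ ^ 2 ∂p = ‖x - m‖ ^ 2 + ∫ y, ‖y - m‖ ^ 2 ∂p := by
    intro x
    have hexpand : ∀ y, ‖x - y‖ ^ 2 = ‖x - m‖ ^ 2 - 2 * ⟪x - m, y - m⟫_ℝ + ‖y - m‖ ^ 2 := by
      intro y
      rw [← norm_sub_sq_real, sub_sub_sub_cancel_right]
    have hcross : Integrable (fun y => 2 * ⟪x - m, y - m⟫_ℝ) p :=
      (hcentered.const_inner _).const_mul 2
    rw [integral_congr_ae (.of_forall hexpand),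
      integral_add (f := fun y => ‖x - m‖ ^ 2 - 2 * ⟪x - m, y - m⟫_ℝ)
        ((integrable_const _).sub hcross) hvar,
      integral_sub (integrable_const _) hcross, integral_const_mul, integral_inner hcentered,
      hmean_zero]
    simp
  have hprod : Integrable (fun q : E × E => ‖q.1 - q.2‖ ^ 2) (p.prod p) :=
    ((hp.comp_fst p).sub (hp.comp_snd p)).integrable_norm_pow' (p := 2)
  rw [integral_prod _ hprod]
  simp_rw [hintegral_right]
  rw [integral_add hvar (integrable_const _), integral_const]
  simp only [probReal_univ, one_smul]
  ring

section CondDistrib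

variable {Ω β γ : Type*} {mΩ : MeasurableSpace Ω} {mβ : MeasurableSpace β}
  {mγ : MeasurableSpace γ} {μ : Measure Ω}

theorem integral_comp_prodMk_of_map_eq_compProd {F : Type*} [NormedAddCommGroup F]
    [NormedSpace ℝ F] {Y : Ω → β} {Z : Ω → γ} (hY : Measurable Y) (hZ : Measurable Z)
    {ν : Measure β} [SFinite ν] {η : Kernel β γ} [IsSFiniteKernel η]
    (hlaw : μ.map (fun ω => (Y ω, Z ω)) = ν ⊗ₘ η) {f : β × γ → F} (hf : StronglyMeasurable f)
    (hint : Integrable (fun ω => f (Y ω, Z ω)) μ) :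
    ∫ ω, f (Y ω, Z ω) ∂μ = ∫ b, ∫ z, f (b, z) ∂η b ∂ν := by
  have hYZ : AEMeasurable (fun ω => (Y ω, Z ω)) μ := (hY.prodMk hZ).aemeasurable
  have hint' : Integrable f (ν ⊗ₘ η) := by
    rwa [← hlaw, integrable_map_measure hf.aestronglyMeasurable hYZ]
  rw [← integral_map hYZ hf.aestronglyMeasurable, hlaw, Measure.integral_compProd hint']

variable [IsFiniteMeasure μ] {E : Type*} [NormedAddCommGroup E] [CompleteSpace E]
  [MeasurableSpace E] [BorelSpace E] [SecondCountableTopology E]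

theorem ae_memLp_two_condDistrib {X : Ω → E} {Y : Ω → β} (hY : Measurable Y)
    (hX : MemLp X 2 μ) :
    ∀ᵐ b ∂μ.map Y, MemLp id 2 (condDistrib X Y μ b) := by
  have hint : Integrable (fun q : β × E => ‖q.2‖ ^ 2) (μ.map fun ω => (Y ω, X ω)) := by
    rw [integrable_map_measure (by fun_prop) (hY.aemeasurable.prodMk hX.1.aemeasurable)]
    exact hX.integrable_norm_pow' (p := 2)
  filter_upwards [hint.condDistrib_ae_map hX.1.aemeasurable] with b hb
  exact (memLp_two_iff_integrable_sq_norm aestronglyMeasurable_id).2 hb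

theorem ae_integral_condDistrib_eq_self [NormedSpace ℝ E] {X Y : Ω → E} (hY : Measurable Y)
    (hX : Integrable X μ)
    (hY_eq : Y =ᵐ[μ] μ[X | MeasurableSpace.comap Y inferInstance]) :
    ∀ᵐ b ∂μ.map Y, ∫ x, x ∂condDistrib X Y μ b = b := by
  have hmeas : MeasurableSet {b | ∫ x, x ∂condDistrib X Y μ b = b} :=
    measurableSet_eq_fun
      (stronglyMeasurable_id.integral_kernel (κ := condDistrib X Y μ)).measurable measurable_id
  rw [ae_map_iff hY.aemeasurable hmeas]
  filter_upwards [hY_eq, condExp_ae_eq_integral_condDistrib' hY hX] with ω h₁ h₂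
  exact (h₁.trans h₂).symm

end CondDistrib

theorem expected_sq_error_posterior_sampling_general
    {Ω : Type*} [MeasurableSpace Ω] [StandardBorelSpace Ω]
    {μ : Measure Ω} [IsProbabilityMeasure μ] {n : ℕ}
    (X Xh Xt : Ω → EuclideanSpace ℝ (Fin n))
    (hX : Measurable X) (hXh : Measurable Xh) (hXt : Measurable Xt)
    (hX2 : MemLp X 2 μ) (hXh2 : MemLp Xh 2 μ) (hXt2 : MemLp Xt 2 μ)
    -- X̃ is conditionally independent of X given X̂:
    (hci : CondIndepFun (MeasurableSpace.comap Xh inferInstance) (hXh.comap_le) X Xt μ)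
    -- the conditional distribution of X̃ given X̂ equals that of X given X̂:
    (hcd : condDistrib Xt Xh μ = condDistrib X Xh μ)
    -- X̂ = E[X | X̂] almost surely:
    (hmean : Xh =ᵐ[μ] μ[X | MeasurableSpace.comap Xh inferInstance]) :
    ∫ ω, ‖X ω - Xt ω‖ ^ 2 ∂μ = 2 * ∫ ω, ‖X ω - Xh ω‖ ^ 2 ∂μ := by
  set κ := condDistrib X Xh μ
  have hlaw₃ : μ.map (fun ω => (Xh ω, X ω, Xt ω)) = μ.map Xh ⊗ₘ (κ ×ₖ κ) := by
    have h := (condIndepFun_iff_map_prod_eq_prod_condDistrib_prod_condDistrib hX hXt hXh).1 hci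
    rwa [hcd, ← Measure.compProd_eq_comp_prod] at h
  have hlaw₂ : μ.map (fun ω => (Xh ω, X ω)) = μ.map Xh ⊗ₘ κ :=
    (compProd_map_condDistrib hX.aemeasurable).symm
  have hfiber : ∀ᵐ b ∂μ.map Xh,
      ∫ q, ‖q.1 - q.2‖ ^ 2 ∂(κ ×ₖ κ) b = 2 * ∫ x, ‖x - b‖ ^ 2 ∂κ b := by
    filter_upwards [ae_memLp_two_condDistrib hXh hX2,
      ae_integral_condDistrib_eq_self hXh (hX2.integrable one_le_two) hmean] with b h₂ h₁
    rw [Kernel.prod_apply, integral_prod_norm_sub_sq _ h₂, h₁]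
  calc ∫ ω, ‖X ω - Xt ω‖ ^ 2 ∂μ
      = ∫ b, ∫ q, ‖q.1 - q.2‖ ^ 2 ∂(κ ×ₖ κ) b ∂μ.map Xh :=
        integral_comp_prodMk_of_map_eq_compProd (f := fun q => ‖q.2.1 - q.2.2‖ ^ 2) hXh
          (hX.prodMk hXt) hlaw₃ (by fun_prop) ((hX2.sub hXt2).integrable_norm_pow' (p := 2))
    _ = ∫ b, 2 * ∫ x, ‖x - b‖ ^ 2 ∂κ b ∂μ.map Xh := integral_congr_ae hfiber
    _ = 2 * ∫ ω, ‖X ω - Xh ω‖ ^ 2 ∂μ := by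
        rw [integral_const_mul, integral_comp_prodMk_of_map_eq_compProd
          (f := fun q => ‖q.2 - q.1‖ ^ 2) hXh hX hlaw₂ (by fun_prop)
          ((hX2.sub hXh2).integrable_norm_pow' (p := 2))]

/-- if X̃ is conditionally independent of X given X̂, the conditional
distribution of X̃ given X̂ equals that of X given X̂, and X̂ = E[X | X̂] a.s., then
E‖X − X̃‖² = 2 E‖X − X̂‖². -/
theorem expected_sq_error_posterior_sampling
    {Ω : Type*} [MeasurableSpace Ω] [StandardBorelSpace Ω] [Nonempty Ω]
    {μ : Measure Ω} [IsProbabilityMeasure μ] {n : ℕ}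
    (X Xh Xt : Ω → EuclideanSpace ℝ (Fin n))
    (hX : Measurable X) (hXh : Measurable Xh) (hXt : Measurable Xt)
    (hX2 : MemLp X 2 μ) (hXh2 : MemLp Xh 2 μ) (hXt2 : MemLp Xt 2 μ)
    -- X̃ is conditionally independent of X given X̂:
    (hci : CondIndepFun (MeasurableSpace.comap Xh inferInstance) (hXh.comap_le) X Xt μ)
    -- the conditional distribution of X̃ given X̂ equals that of X given X̂:
    (hcd : condDistrib Xt Xh μ = condDistrib X Xh μ)
    -- X̂ = E[X | X̂] almost surely:
    (hmean : Xh =ᵐ[μ] μ[X | MeasurableSpace.comap Xh inferInstance]) :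
    ∫ ω, ‖X ω - Xt ω‖ ^ 2 ∂μ = 2 * ∫ ω, ‖X ω - Xh ω‖ ^ 2 ∂μ :=
  expected_sq_error_posterior_sampling_general X Xh Xt hX hXh hXt hX2 hXh2 hXt2 hci hcd hmean
end
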